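/- arXiv:2212.05152 — 2 statements merged into one kernel-verified Lean document; each statement's English description precedes it below -/
import Mathlib

section
/- Let Y be a compact metric space and let Φ : C(Y) → ℝ be a (finite real-valued) functional that is monotone (g₁ ≤ g₂ implies Φ(g₁) ≤ Φ(g₂)), satisfies Φ(g + c) = Φ(g) + c for every constant c ∈ ℝ, is convex, and is lower semicontinuous with respect to the sup norm. Then there exist a Borel probability measure σ on Y and a constant k ∈ ℝ such that ∫_Y g dσ + k ≤ Φ(g) for every g ∈ C(Y); in particular sup_{g∈C(Y)} { ∫_Y g dσ − Φ(g) } < +∞. -/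
open MeasureTheory Topology Filter Set
open scoped ENNReal NNReal Pointwise

noncomputable section

namespace RMKAux

variable {Y : Type*} [MetricSpace Y] [CompactSpace Y]

section Functional

variable (Λ : C(Y, ℝ) →ₗ[ℝ] ℝ)

/-- Monotonicity of a positive linear functional. -/
theorem lin_mono (hpos : ∀ f : C(Y, ℝ), (∀ x, 0 ≤ f x) → 0 ≤ Λ f)
    {f g : C(Y, ℝ)} (h : ∀ x, f x ≤ g x) : Λ f ≤ Λ g := by
  have h2 := hpos (g - f) (fun x => by simp only [ContinuousMap.sub_apply]; linarith [h x])
  rw [map_sub] at h2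
  linarith

/-- The set of values of `Λ` on test functions dominating `1` on `K`. -/
def rieszSet (K : Set Y) : Set ℝ :=
  {r | ∃ f : C(Y, ℝ), (∀ x, 0 ≤ f x) ∧ (∀ x ∈ K, 1 ≤ f x) ∧ Λ f = r}

/-- Riesz content of a set. -/
def lam (K : Set Y) : ℝ := sInf (rieszSet Λ K)

variable (hpos : ∀ f : C(Y, ℝ), (∀ x, 0 ≤ f x) → 0 ≤ Λ f)
    (hone : Λ (ContinuousMap.const Y 1) = 1)

set_option linter.unusedSectionVars false

include hpos hone

theorem one_mem_rieszSet (K : Set Y) : (1:ℝ) ∈ rieszSet Λ K :=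
  ⟨ContinuousMap.const Y 1, fun _ => zero_le_one, fun _ _ => le_refl 1, hone⟩

theorem rieszSet_nonneg (K : Set Y) : ∀ r ∈ rieszSet Λ K, (0:ℝ) ≤ r := by
  rintro r ⟨f, hf0, _, rfl⟩
  exact hpos f hf0

theorem rieszSet_bddBelow (K : Set Y) : BddBelow (rieszSet Λ K) :=
  ⟨0, fun r hr => rieszSet_nonneg Λ hpos hone K r hr⟩

theorem lam_nonneg (K : Set Y) : 0 ≤ lam Λ K :=
  le_csInf ⟨1, one_mem_rieszSet Λ hpos hone K⟩ (rieszSet_nonneg Λ hpos hone K)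

theorem lam_le (K : Set Y) {f : C(Y, ℝ)} (hf0 : ∀ x, 0 ≤ f x)
    (hf1 : ∀ x ∈ K, 1 ≤ f x) : lam Λ K ≤ Λ f :=
  csInf_le (rieszSet_bddBelow Λ hpos hone K) ⟨f, hf0, hf1, rfl⟩

theorem lam_le_one (K : Set Y) : lam Λ K ≤ 1 :=
  csInf_le (rieszSet_bddBelow Λ hpos hone K) (one_mem_rieszSet Λ hpos hone K)

theorem lam_mono {K₁ K₂ : Set Y} (h : K₁ ⊆ K₂) : lam Λ K₁ ≤ lam Λ K₂ := by
  apply le_csInf ⟨1, one_mem_rieszSet Λ hpos hone K₂⟩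
  rintro r ⟨f, hf0, hf1, rfl⟩
  exact lam_le Λ hpos hone K₁ hf0 (fun x hx => hf1 x (h hx))

theorem lam_union_le (K₁ K₂ : Set Y) :
    lam Λ (K₁ ∪ K₂) ≤ lam Λ K₁ + lam Λ K₂ := by
  refine le_of_forall_pos_le_add (fun ε hε => ?_)
  obtain ⟨r₁, hr₁, hr₁'⟩ :=
    exists_lt_of_csInf_lt ⟨1, one_mem_rieszSet Λ hpos hone K₁⟩
      (show lam Λ K₁ < lam Λ K₁ + ε/2 by linarith)
  obtain ⟨r₂, hr₂, hr₂'⟩ :=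
    exists_lt_of_csInf_lt ⟨1, one_mem_rieszSet Λ hpos hone K₂⟩
      (show lam Λ K₂ < lam Λ K₂ + ε/2 by linarith)
  obtain ⟨f₁, hf₁0, hf₁1, rfl⟩ := hr₁
  obtain ⟨f₂, hf₂0, hf₂1, rfl⟩ := hr₂
  have : lam Λ (K₁ ∪ K₂) ≤ Λ (f₁ + f₂) := by
    refine lam_le Λ hpos hone _ (fun x => by
      have := hf₁0 x; have := hf₂0 x
      simp only [ContinuousMap.add_apply]; linarith) ?_
    rintro x (hx | hx)
    · have := hf₁1 x hx; have := hf₂0 x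
      simp only [ContinuousMap.add_apply]; linarith
    · have := hf₂1 x hx; have := hf₁0 x
      simp only [ContinuousMap.add_apply]; linarith
  rw [map_add] at this
  linarith

theorem le_lam_union {K₁ K₂ : Set Y} (hK₁ : IsClosed K₁) (hK₂ : IsClosed K₂)
    (hd : Disjoint K₁ K₂) :
    lam Λ K₁ + lam Λ K₂ ≤ lam Λ (K₁ ∪ K₂) := by
  refine le_csInf ⟨1, one_mem_rieszSet Λ hpos hone _⟩ ?_
  rintro r ⟨f, hf0, hf1, rfl⟩
  obtain ⟨φ, hφ₂, hφ₁, hφ01⟩ := exists_continuous_zero_one_of_isClosed hK₂ hK₁ hd.symm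
  have hφ0 : ∀ x, 0 ≤ φ x := fun x => (hφ01 x).1
  have hφ1' : ∀ x, φ x ≤ 1 := fun x => (hφ01 x).2
  have h₁ : lam Λ K₁ ≤ Λ (φ * f) := by
    refine lam_le Λ hpos hone _ (fun x => by
      simp only [ContinuousMap.mul_apply]
      exact mul_nonneg (hφ0 x) (hf0 x)) (fun x hx => ?_)
    have h1 : φ x = 1 := hφ₁ hx
    have h2 : 1 ≤ f x := hf1 x (Or.inl hx)
    simp only [ContinuousMap.mul_apply, h1, one_mul]
    exact h2
  have h₂ : lam Λ K₂ ≤ Λ ((1 - φ) * f) := by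
    refine lam_le Λ hpos hone _ (fun x => by
      simp only [ContinuousMap.mul_apply, ContinuousMap.sub_apply, ContinuousMap.one_apply]
      exact mul_nonneg (by linarith [hφ1' x]) (hf0 x)) (fun x hx => ?_)
    have h1 : φ x = 0 := hφ₂ hx
    have h2 : 1 ≤ f x := hf1 x (Or.inr hx)
    simp only [ContinuousMap.mul_apply, ContinuousMap.sub_apply, ContinuousMap.one_apply, h1]
    linarith
  have key : φ * f + (1 - φ) * f = f := by ring
  have : Λ (φ * f) + Λ ((1 - φ) * f) = Λ f := by rw [← map_add, key]
  linarith

/-- `lam` of the whole space is `1`. -/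
theorem lam_univ : lam Λ (univ : Set Y) = 1 := by
  refine le_antisymm (lam_le_one Λ hpos hone _) (le_csInf ⟨1, one_mem_rieszSet Λ hpos hone _⟩ ?_)
  rintro r ⟨f, hf0, hf1, rfl⟩
  have : Λ (ContinuousMap.const Y 1) ≤ Λ f := lin_mono Λ hpos (fun x => hf1 x (mem_univ x))
  rwa [hone] at this

/-- The Riesz content associated to `Λ`. -/
def rieszContent : Content Y where
  toFun K := Real.toNNReal (lam Λ K)
  mono' K₁ K₂ h := Real.toNNReal_le_toNNReal (lam_mono Λ hpos hone h)
  sup_disjoint' K₁ K₂ hd h₁ h₂ := by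
    have h1 : lam Λ ((K₁ ⊔ K₂ : TopologicalSpace.Compacts Y) : Set Y) ≤ lam Λ K₁ + lam Λ K₂ := by
      simpa [TopologicalSpace.Compacts.coe_sup] using lam_union_le Λ hpos hone (K₁ : Set Y) K₂
    have h2 : lam Λ K₁ + lam Λ K₂ ≤ lam Λ ((K₁ ⊔ K₂ : TopologicalSpace.Compacts Y) : Set Y) := by
      simpa [TopologicalSpace.Compacts.coe_sup] using le_lam_union Λ hpos hone h₁ h₂ hd
    show (lam Λ ((K₁ ⊔ K₂ : TopologicalSpace.Compacts Y) : Set Y)).toNNReal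
      = (lam Λ (K₁ : Set Y)).toNNReal + (lam Λ (K₂ : Set Y)).toNNReal
    rw [le_antisymm h1 h2,
      Real.toNNReal_add (lam_nonneg Λ hpos hone _) (lam_nonneg Λ hpos hone _)]
  sup_le' K₁ K₂ := by
    have h1 : lam Λ ((K₁ ⊔ K₂ : TopologicalSpace.Compacts Y) : Set Y) ≤ lam Λ K₁ + lam Λ K₂ := by
      simpa [TopologicalSpace.Compacts.coe_sup] using lam_union_le Λ hpos hone (K₁ : Set Y) K₂
    show (lam Λ ((K₁ ⊔ K₂ : TopologicalSpace.Compacts Y) : Set Y)).toNNReal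
      ≤ (lam Λ (K₁ : Set Y)).toNNReal + (lam Λ (K₂ : Set Y)).toNNReal
    rw [← Real.toNNReal_add (lam_nonneg Λ hpos hone _) (lam_nonneg Λ hpos hone _)]
    exact Real.toNNReal_le_toNNReal h1

theorem rieszContent_coe (K : TopologicalSpace.Compacts Y) :
    (rieszContent Λ hpos hone K : ℝ≥0∞) = ENNReal.ofReal (lam Λ (K : Set Y)) := rfl

variable [MeasurableSpace Y] [BorelSpace Y]

/-- The measure associated to the Riesz content of `Λ`. -/
def rmk : Measure Y := (rieszContent Λ hpos hone).measure

theorem rmk_univ : rmk Λ hpos hone (univ : Set Y) = 1 := by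
  rw [rmk, Content.measure_apply _ MeasurableSet.univ,
    (rieszContent Λ hpos hone).outerMeasure_of_isOpen univ isOpen_univ]
  refine le_antisymm ?_ ?_
  · refine iSup_le fun K => iSup_le fun _ => ?_
    rw [rieszContent_coe, ← ENNReal.ofReal_one]
    exact ENNReal.ofReal_le_ofReal (lam_le_one Λ hpos hone _)
  · have h := Content.le_innerContent (rieszContent Λ hpos hone)
      ⟨univ, isCompact_univ⟩ ⟨univ, isOpen_univ⟩ (subset_refl _)
    refine le_trans ?_ h
    rw [rieszContent_coe]
    simp only [TopologicalSpace.Compacts.coe_mk]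
    rw [lam_univ Λ hpos hone, ENNReal.ofReal_one]

instance rmk_prob : IsProbabilityMeasure (rmk Λ hpos hone) := ⟨rmk_univ Λ hpos hone⟩

/-- The key estimate: the measure of an open set is bounded by `Λ h` for any
nonnegative continuous `h` that is `≥ 1` on the set. -/
theorem rmk_open_le {U : Set Y} (hU : IsOpen U) {h : C(Y, ℝ)}
    (h0 : ∀ x, 0 ≤ h x) (h1 : ∀ x ∈ U, 1 ≤ h x) :
    rmk Λ hpos hone U ≤ ENNReal.ofReal (Λ h) := by
  rw [rmk, Content.measure_apply _ hU.measurableSet,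
    (rieszContent Λ hpos hone).outerMeasure_of_isOpen U hU]
  refine iSup_le fun K => iSup_le fun hK => ?_
  rw [rieszContent_coe]
  exact ENNReal.ofReal_le_ofReal (lam_le Λ hpos hone _ h0 (fun x hx => h1 x (hK hx)))

/-- Integral against the Riesz measure is dominated by `Λ`, for nonnegative functions. -/
theorem integral_rmk_le_of_nonneg (f : C(Y, ℝ)) (hf : ∀ x, 0 ≤ f x) :
    ∫ x, f x ∂(rmk Λ hpos hone) ≤ Λ f := by
  set μ := rmk Λ hpos hone with hμ
  refine le_of_forall_pos_le_add (fun ε hε => ?_)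
  set δ := ε / 2 with hδ
  have hδ0 : 0 < δ := by positivity
  set N : ℕ := ⌈‖f‖ / δ⌉₊ + 1 with hN
  -- the open sets
  set U : ℕ → Set Y := fun i => {x | ((i : ℝ) - 1/2) * δ < f x} with hU
  have hUopen : ∀ i, IsOpen (U i) := fun _ => isOpen_lt continuous_const f.continuous
  -- the staircase test functions
  set h : ℕ → C(Y, ℝ) := fun i =>
    ⟨fun x => min 1 (max 0 ((f x - ((i : ℝ) - 1) * δ) * (2 / δ))),
      continuous_const.min (continuous_const.max
        ((f.continuous.sub continuous_const).mul continuous_const))⟩ with hh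
  have h_apply : ∀ i x, h i x = min 1 (max 0 ((f x - ((i : ℝ) - 1) * δ) * (2 / δ))) :=
    fun i x => rfl
  have h_nonneg : ∀ i x, 0 ≤ h i x := fun i x => le_min zero_le_one (le_max_left 0 _)
  have h_le_one : ∀ i x, h i x ≤ 1 := fun i x => min_le_left _ _
  have h_one_on_U : ∀ i, ∀ x ∈ U i, 1 ≤ h i x := by
    intro i x hx
    have hx' : ((i : ℝ) - 1/2) * δ < f x := hx
    have h2 : δ / 2 ≤ f x - ((i : ℝ) - 1) * δ := by nlinarith
    have h1 : (1 : ℝ) ≤ (f x - ((i : ℝ) - 1) * δ) * (2 / δ) := by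
      calc (1:ℝ) = (δ/2) * (2/δ) := by field_simp
        _ ≤ (f x - ((i : ℝ) - 1) * δ) * (2 / δ) :=
            mul_le_mul_of_nonneg_right h2 (by positivity)
    rw [h_apply]
    exact le_min le_rfl (le_max_of_le_right h1)
  have h_zero : ∀ (i : ℕ) (x : Y), f x ≤ ((i : ℝ) - 1) * δ → h i x = 0 := by
    intro i x hx
    rw [h_apply]
    have h1 : (f x - ((i : ℝ) - 1) * δ) * (2 / δ) ≤ 0 := by
      apply mul_nonpos_of_nonpos_of_nonneg (by linarith) (by positivity)
    rw [max_eq_left h1, min_eq_right zero_le_one]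
  -- measure bound for the opens
  have hmeasU : ∀ i, μ (U i) ≤ ENNReal.ofReal (Λ (h i)) := fun i =>
    rmk_open_le Λ hpos hone (hUopen i) (h_nonneg i) (h_one_on_U i)
  -- pointwise upper bound (A)
  have hA : ∀ x, f x ≤ δ + δ * ∑ i ∈ Finset.Icc 1 N, (U i).indicator (fun _ => (1:ℝ)) x := by
    intro x
    set a := f x / δ with ha
    have ha0 : 0 ≤ a := div_nonneg (hf x) hδ0.le
    have hfx : f x = a * δ := by rw [ha, div_mul_cancel₀ _ hδ0.ne']
    set m : ℕ := ⌈a⌉₊ with hm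
    rcases Nat.eq_zero_or_pos m with hm0 | hm1
    · have : a = 0 := le_antisymm (Nat.ceil_eq_zero.mp (hm ▸ hm0)) ha0
      have hsum : 0 ≤ ∑ i ∈ Finset.Icc 1 N, (U i).indicator (fun _ => (1:ℝ)) x :=
        Finset.sum_nonneg fun i _ => Set.indicator_nonneg (fun _ _ => zero_le_one) x
      nlinarith [hfx, this]
    · have hsub : Finset.Icc 1 (m - 1) ⊆ Finset.Icc 1 N := by
        apply Finset.Icc_subset_Icc le_rfl
        have hm' : m ≤ ⌈‖f‖ / δ⌉₊ := by
          apply Nat.ceil_le_ceil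
          rw [ha]
          gcongr
          have h1 : |f x| ≤ ‖f‖ := by
            rw [← Real.norm_eq_abs]; exact f.norm_coe_le_norm x
          linarith [(abs_le.mp h1).2]
        omega
      have hone' : ∀ i ∈ Finset.Icc 1 (m - 1), (U i).indicator (fun _ => (1:ℝ)) x = 1 := by
        intro i hi
        rw [Finset.mem_Icc] at hi
        have hilt : (i : ℝ) < a := by
          have him : i < m := by omega
          exact Nat.lt_ceil.mp (hm ▸ him)
        have : x ∈ U i := by
          show ((i : ℝ) - 1/2) * δ < f x
          rw [hfx]; nlinarith
        simp [Set.indicator_of_mem this]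
      have hsum_ge : ((m : ℝ) - 1) ≤ ∑ i ∈ Finset.Icc 1 N, (U i).indicator (fun _ => (1:ℝ)) x := by
        calc ((m : ℝ) - 1) = ∑ i ∈ Finset.Icc 1 (m - 1), (1:ℝ) := by
              rw [Finset.sum_const, Nat.card_Icc]
              have : (m - 1 + 1 - 1 : ℕ) = m - 1 := by omega
              rw [this, nsmul_eq_mul, mul_one, Nat.cast_pred hm1]
          _ = ∑ i ∈ Finset.Icc 1 (m - 1), (U i).indicator (fun _ => (1:ℝ)) x :=
              (Finset.sum_congr rfl hone').symm
          _ ≤ _ := Finset.sum_le_sum_of_subset_of_nonneg hsub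
              (fun i _ _ => Set.indicator_nonneg (fun _ _ => zero_le_one) x)
      have hma : a ≤ m := Nat.le_ceil a
      rw [hfx]
      nlinarith
  -- pointwise bound (B)
  have hB : ∀ x, δ * ∑ i ∈ Finset.Icc 1 N, h i x ≤ f x + δ := by
    intro x
    set a := f x / δ with ha
    have ha0 : 0 ≤ a := div_nonneg (hf x) hδ0.le
    have hfx : f x = a * δ := by rw [ha, div_mul_cancel₀ _ hδ0.ne']
    set K : ℕ := ⌈a⌉₊ with hK
    have hsum_le : ∑ i ∈ Finset.Icc 1 N, h i x ≤ (K : ℝ) := by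
      calc ∑ i ∈ Finset.Icc 1 N, h i x
          ≤ ∑ i ∈ Finset.Icc 1 N, (if i ≤ K then (1:ℝ) else 0) := by
            refine Finset.sum_le_sum (fun i hi => ?_)
            by_cases hiK : i ≤ K
            · simpa [hiK] using h_le_one i x
            · have hKi : (K : ℝ) ≤ (i : ℝ) - 1 := by
                have h' : K + 1 ≤ i := by omega
                have h'' : ((K + 1 : ℕ) : ℝ) ≤ (i : ℝ) := by exact_mod_cast h'
                push_cast at h''
                linarith
              have : f x ≤ ((i : ℝ) - 1) * δ := by
                rw [hfx]
                have haK : a ≤ (K : ℝ) := Nat.le_ceil a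
                nlinarith
              simp [hiK, h_zero i x this]
        _ = ∑ i ∈ (Finset.Icc 1 N).filter (· ≤ K), (1:ℝ) := by
            rw [Finset.sum_filter]
        _ ≤ (K : ℝ) := by
            rw [Finset.sum_const, nsmul_eq_mul, mul_one]
            have : (Finset.Icc 1 N).filter (· ≤ K) ⊆ Finset.Icc 1 K := by
              intro i hi
              simp only [Finset.mem_filter, Finset.mem_Icc] at hi ⊢
              omega
            have := Finset.card_le_card this
            rw [Nat.card_Icc] at this
            exact_mod_cast Nat.le_of_lt_succ (by omega)
    have hK_le : (K : ℝ) ≤ a + 1 := (Nat.ceil_lt_add_one ha0).le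
    calc δ * ∑ i ∈ Finset.Icc 1 N, h i x ≤ δ * (K : ℝ) :=
          mul_le_mul_of_nonneg_left hsum_le hδ0.le
      _ ≤ δ * (a + 1) := mul_le_mul_of_nonneg_left hK_le hδ0.le
      _ = f x + δ := by rw [hfx]; ring
  -- integrability
  have int_f : Integrable (fun x => f x) μ :=
    f.continuous.integrable_of_hasCompactSupport (HasCompactSupport.of_compactSpace _)
  have int_ind : ∀ i, Integrable ((U i).indicator (fun _ => (1:ℝ))) μ := by
    intro i
    rw [integrable_indicator_iff (hUopen i).measurableSet]
    exact integrableOn_const (measure_ne_top μ _)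
  have int_sum : Integrable (fun x => ∑ i ∈ Finset.Icc 1 N, (U i).indicator (fun _ => (1:ℝ)) x) μ :=
    integrable_finset_sum _ (fun i _ => int_ind i)
  have int_rhs : Integrable (fun x =>
      δ + δ * ∑ i ∈ Finset.Icc 1 N, (U i).indicator (fun _ => (1:ℝ)) x) μ :=
    (integrable_const δ).add (int_sum.const_mul δ)
  -- integral computation
  have hint : ∫ x, (δ + δ * ∑ i ∈ Finset.Icc 1 N, (U i).indicator (fun _ => (1:ℝ)) x) ∂μ
      = δ + δ * ∑ i ∈ Finset.Icc 1 N, (μ (U i)).toReal := by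
    rw [integral_add (integrable_const δ) (int_sum.const_mul δ), integral_const,
      integral_const_mul, integral_finset_sum _ (fun i _ => int_ind i)]
    have : ∀ i ∈ Finset.Icc 1 N, ∫ x, (U i).indicator (fun _ => (1:ℝ)) x ∂μ
        = (μ (U i)).toReal := by
      intro i _
      rw [integral_indicator_const (1:ℝ) (hUopen i).measurableSet, smul_eq_mul, mul_one, Measure.real]
    rw [Finset.sum_congr rfl this]
    simp [measure_univ]
  -- put everything together
  have step1 : ∫ x, f x ∂μ ≤ δ + δ * ∑ i ∈ Finset.Icc 1 N, (μ (U i)).toReal := by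
    rw [← hint]
    exact integral_mono int_f int_rhs hA
  have step2 : ∑ i ∈ Finset.Icc 1 N, (μ (U i)).toReal ≤ ∑ i ∈ Finset.Icc 1 N, Λ (h i) :=
    Finset.sum_le_sum (fun i _ => ENNReal.toReal_le_of_le_ofReal
      (hpos _ (h_nonneg i)) (hmeasU i))
  have step3 : δ * ∑ i ∈ Finset.Icc 1 N, Λ (h i) ≤ Λ f + δ := by
    have hmap : δ * ∑ i ∈ Finset.Icc 1 N, Λ (h i) = Λ (δ • ∑ i ∈ Finset.Icc 1 N, h i) := by
      rw [_root_.map_smul, map_sum]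
      simp [smul_eq_mul]
    rw [hmap]
    have hmono' : Λ (δ • ∑ i ∈ Finset.Icc 1 N, h i) ≤ Λ (f + ContinuousMap.const Y δ) := by
      apply lin_mono Λ hpos
      intro x
      have := hB x
      simp only [ContinuousMap.smul_apply, ContinuousMap.add_apply, ContinuousMap.const_apply,
        ContinuousMap.coe_sum, Finset.sum_apply, smul_eq_mul]
      convert this using 2
    have hconst : Λ (f + ContinuousMap.const Y δ) = Λ f + δ := by
      have : (ContinuousMap.const Y δ) = δ • (ContinuousMap.const Y (1:ℝ)) := by
        ext x; simp
      rw [map_add, this, _root_.map_smul, hone, smul_eq_mul, mul_one]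
    rw [← hconst]
    exact hmono'
  calc ∫ x, f x ∂μ ≤ δ + δ * ∑ i ∈ Finset.Icc 1 N, (μ (U i)).toReal := step1
    _ ≤ δ + δ * ∑ i ∈ Finset.Icc 1 N, Λ (h i) := by
        have := Finset.sum_nonneg (fun i (_ : i ∈ Finset.Icc 1 N) =>
          ENNReal.toReal_nonneg (a := μ (U i)))
        nlinarith [step2, hδ0.le]
    _ ≤ δ + (Λ f + δ) := by linarith [step3]
    _ = Λ f + ε := by rw [hδ]; ring

/-- Integral against the Riesz measure is dominated by `Λ`. -/
theorem integral_rmk_le (g : C(Y, ℝ)) :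
    ∫ x, g x ∂(rmk Λ hpos hone) ≤ Λ g := by
  have int_g : Integrable (fun x => g x) (rmk Λ hpos hone) :=
    g.continuous.integrable_of_hasCompactSupport (HasCompactSupport.of_compactSpace _)
  have hf0 : ∀ x, 0 ≤ (g + ContinuousMap.const Y ‖g‖) x := by
    intro x
    simp only [ContinuousMap.add_apply, ContinuousMap.const_apply]
    have h1 : |g x| ≤ ‖g‖ := by
      rw [← Real.norm_eq_abs]; exact g.norm_coe_le_norm x
    linarith [(abs_le.mp h1).1]
  have key := integral_rmk_le_of_nonneg Λ hpos hone _ hf0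
  have hint : ∫ x, (g + ContinuousMap.const Y ‖g‖) x ∂(rmk Λ hpos hone)
      = (∫ x, g x ∂(rmk Λ hpos hone)) + ‖g‖ := by
    simp only [ContinuousMap.add_apply, ContinuousMap.const_apply]
    rw [integral_add int_g (integrable_const _), integral_const]
    simp [measure_univ]
  have hΛ : Λ (g + ContinuousMap.const Y ‖g‖) = Λ g + ‖g‖ := by
    have hc : (ContinuousMap.const Y ‖g‖) = ‖g‖ • (ContinuousMap.const Y (1:ℝ)) := by
      ext x; simp
    rw [map_add, hc, _root_.map_smul, hone, smul_eq_mul, mul_one]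
  rw [hint, hΛ] at key
  linarith

end Functional

end RMKAux

open RMKAux in
/-- A monotone, convex, lower semicontinuous functional on `C(Y)` that is affine
on the constants lies above some continuous affine functional given by a
probability measure; in particular its Legendre transform is finite at that
measure. -/
theorem exists_probabilityMeasure_le_of_monotone_convex_lsc
    {Y : Type*} [MetricSpace Y] [CompactSpace Y] [MeasurableSpace Y] [BorelSpace Y]
    (Φ : C(Y, ℝ) → ℝ)
    (hmono : ∀ g₁ g₂ : C(Y, ℝ), (∀ y, g₁ y ≤ g₂ y) → Φ g₁ ≤ Φ g₂)
    (haff : ∀ (g : C(Y, ℝ)) (c : ℝ), Φ (g + ContinuousMap.const Y c) = Φ g + c)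
    (hconv : ∀ (g₁ g₂ : C(Y, ℝ)) (l : ℝ), 0 ≤ l → l ≤ 1 →
        Φ (l • g₁ + (1 - l) • g₂) ≤ l * Φ g₁ + (1 - l) * Φ g₂)
    (hlsc : LowerSemicontinuous Φ) :
    ∃ (σ : ProbabilityMeasure Y) (k : ℝ),
      (∀ g : C(Y, ℝ), ∫ y, g y ∂(σ : Measure Y) + k ≤ Φ g) ∧
      BddAbove (range fun g : C(Y, ℝ) => ∫ y, g y ∂(σ : Measure Y) - Φ g) := by
  classical
  -- the homogenized sublinear majorant of `Φ - Φ 0`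
  set pSet : C(Y, ℝ) → Set ℝ :=
    fun g => (fun t => (Φ (t • g) - Φ 0) / t) '' Ioi (0:ℝ) with hpSet
  set p : C(Y, ℝ) → ℝ := fun g => sInf (pSet g) with hp
  have hΦconst : ∀ c : ℝ, Φ (ContinuousMap.const Y c) = Φ 0 + c := by
    intro c
    have := haff 0 c
    rwa [zero_add] at this
  have hlow : ∀ (t : ℝ), 0 < t → ∀ g : C(Y, ℝ), Φ 0 - t * ‖g‖ ≤ Φ (t • g) := by
    intro t ht g
    have h1 : Φ 0 ≤ Φ (t • g + ContinuousMap.const Y (t * ‖g‖)) := by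
      apply hmono
      intro y
      have h2 : |g y| ≤ ‖g‖ := by rw [← Real.norm_eq_abs]; exact g.norm_coe_le_norm y
      have := (abs_le.mp h2).1
      simp only [ContinuousMap.zero_apply, ContinuousMap.add_apply, ContinuousMap.smul_apply,
        ContinuousMap.const_apply, smul_eq_mul]
      nlinarith
    rw [haff] at h1
    linarith
  have hpSet_ne : ∀ g, ((Φ g - Φ 0) / 1) ∈ pSet g := by
    intro g
    exact ⟨1, mem_Ioi.2 one_pos, by simp⟩
  have hpSet_bdd : ∀ g, ∀ r ∈ pSet g, -‖g‖ ≤ r := by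
    rintro g r ⟨t, ht, rfl⟩
    rw [mem_Ioi] at ht
    rw [le_div_iff₀ ht]
    have := hlow t ht g
    nlinarith
  have hp_le : ∀ g, p g ≤ Φ g - Φ 0 := by
    intro g
    have := csInf_le ⟨-‖g‖, fun r hr => hpSet_bdd g r hr⟩ (hpSet_ne g)
    rwa [div_one] at this
  have hp_bdd : ∀ g, BddBelow (pSet g) := fun g => ⟨-‖g‖, fun r hr => hpSet_bdd g r hr⟩
  have hp_ne : ∀ g, (pSet g).Nonempty := fun g => ⟨_, hpSet_ne g⟩
  -- positive homogeneity
  have N_hom : ∀ c : ℝ, 0 < c → ∀ g : C(Y, ℝ), p (c • g) = c * p g := by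
    intro c hc g
    have hset : pSet (c • g) = c • pSet g := by
      ext r
      constructor
      · rintro ⟨t, ht, rfl⟩
        rw [mem_Ioi] at ht
        refine ⟨(Φ ((t * c) • g) - Φ 0) / (t * c), ⟨t * c, mem_Ioi.2 (by positivity), rfl⟩, ?_⟩
        show c • ((Φ ((t * c) • g) - Φ 0) / (t * c)) = (Φ (t • (c • g)) - Φ 0) / t
        rw [smul_smul, smul_eq_mul, mul_comm t c]
        field_simp
      · rintro ⟨r', ⟨s, hs, rfl⟩, rfl⟩
        rw [mem_Ioi] at hs
        refine ⟨s / c, mem_Ioi.2 (by positivity), ?_⟩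
        show (Φ ((s / c) • (c • g)) - Φ 0) / (s / c) = c • ((Φ (s • g) - Φ 0) / s)
        rw [smul_smul, div_mul_cancel₀ _ (ne_of_gt hc), smul_eq_mul]
        field_simp
    rw [hp]
    simp only []
    rw [hset, Real.sInf_smul_of_nonneg hc.le, smul_eq_mul]
  -- subadditivity
  have N_add : ∀ g h : C(Y, ℝ), p (g + h) ≤ p g + p h := by
    intro g h
    refine le_of_forall_pos_le_add (fun ε hε => ?_)
    obtain ⟨r₁, hr₁mem, hr₁⟩ := exists_lt_of_csInf_lt (hp_ne g)
      (show sInf (pSet g) < p g + ε/2 by rw [hp]; simp only []; linarith)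
    obtain ⟨r₂, hr₂mem, hr₂⟩ := exists_lt_of_csInf_lt (hp_ne h)
      (show sInf (pSet h) < p h + ε/2 by rw [hp]; simp only []; linarith)
    obtain ⟨t, ht, rfl⟩ := hr₁mem
    obtain ⟨s, hs, rfl⟩ := hr₂mem
    rw [mem_Ioi] at ht hs
    have hts : 0 < t + s := by linarith
    set r : ℝ := t * s / (t + s) with hr
    have hr0 : 0 < r := by positivity
    set l : ℝ := s / (t + s) with hl
    have hl0 : 0 ≤ l := by positivity
    have hl1 : l ≤ 1 := by
      rw [hl, div_le_one hts]; linarith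
    have hl1' : 1 - l = t / (t + s) := by
      rw [hl]; field_simp; ring
    have e1 : l * t = r := by rw [hl, hr]; field_simp
    have e2 : (1 - l) * s = r := by rw [hl1', hr]; field_simp
    have hcomb : l • (t • g) + (1 - l) • (s • h) = r • (g + h) := by
      rw [smul_smul, smul_smul, e1, e2, ← smul_add]
    have hconv' := hconv (t • g) (s • h) l hl0 hl1
    rw [hcomb] at hconv'
    have hmem : (Φ (r • (g + h)) - Φ 0) / r ∈ pSet (g + h) := ⟨r, mem_Ioi.2 hr0, rfl⟩
    have key : (Φ (r • (g + h)) - Φ 0) / r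
        ≤ (Φ (t • g) - Φ 0) / t + (Φ (s • h) - Φ 0) / s := by
      have h1 : (Φ (r • (g + h)) - Φ 0) / r ≤ (l * Φ (t • g) + (1 - l) * Φ (s • h) - Φ 0) / r :=
        div_le_div_of_nonneg_right (by linarith [hconv']) hr0.le
      have h2 : (l * Φ (t • g) + (1 - l) * Φ (s • h) - Φ 0) / r
          = (Φ (t • g) - Φ 0) / t + (Φ (s • h) - Φ 0) / s := by
        rw [hl, hl1', hr]
        field_simp
        ring
      linarith
    have hple : p (g + h) ≤ (Φ (r • (g + h)) - Φ 0) / r := csInf_le (hp_bdd _) hmem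
    linarith
  -- p 0 = 0
  have hp0 : (0:ℝ) ≤ p 0 := by
    apply le_csInf (hp_ne 0)
    rintro r ⟨t, ht, rfl⟩
    simp only [smul_zero]
    simp
  -- Hahn–Banach
  obtain ⟨Λ, -, hΛ⟩ := exists_extension_of_le_sublinear ⟨⊥, 0⟩ p N_hom N_add
    (by
      rintro ⟨x, hx⟩
      rw [Submodule.mem_bot] at hx
      subst hx
      simpa using hp0)
  have hΛle : ∀ g : C(Y, ℝ), Λ g ≤ Φ g - Φ 0 := fun g => (hΛ g).trans (hp_le g)
  have hpos : ∀ f : C(Y, ℝ), (∀ x, 0 ≤ f x) → 0 ≤ Λ f := by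
    intro f hf
    have h1 : Λ (-f) ≤ Φ (-f) - Φ 0 := hΛle (-f)
    have h2 : Φ (-f) ≤ Φ 0 := hmono _ _ (fun y => by
      simp only [ContinuousMap.neg_apply, ContinuousMap.zero_apply]
      linarith [hf y])
    rw [map_neg] at h1
    linarith
  have hone : Λ (ContinuousMap.const Y 1) = 1 := by
    have h1 : Λ (ContinuousMap.const Y 1) ≤ 1 := by
      have := hΛle (ContinuousMap.const Y 1)
      rw [hΦconst 1] at this
      linarith
    have h2 : Λ (-(ContinuousMap.const Y 1)) ≤ -1 := by
      have h3 := hΛle (ContinuousMap.const Y (-1 : ℝ))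
      rw [hΦconst (-1)] at h3
      have heq : -(ContinuousMap.const Y 1) = ContinuousMap.const Y (-1 : ℝ) := by
        ext x; simp
      rw [heq]
      linarith
    rw [map_neg] at h2
    linarith
  -- the representing measure
  refine ⟨⟨rmk Λ hpos hone, rmk_prob Λ hpos hone⟩, Φ 0, ?_, ?_⟩
  · intro g
    have h1 : ∫ y, g y ∂(rmk Λ hpos hone) ≤ Λ g := integral_rmk_le Λ hpos hone g
    have h2 := hΛle g
    simp only [ProbabilityMeasure.coe_mk]
    linarith
  · refine ⟨-Φ 0, ?_⟩
    rintro r ⟨g, rfl⟩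
    have h1 : ∫ y, g y ∂(rmk Λ hpos hone) ≤ Λ g := integral_rmk_le Λ hpos hone g
    have h2 := hΛle g
    simp only [ProbabilityMeasure.coe_mk]
    linarith

end
end

section
/- Let X be a compact metric space and let S ⊆ P(X) × P(X) be a convex weak*-compact gambling house that is transitive ((μ,σ) ∈ S and (σ,ν) ∈ S imply (μ,ν) ∈ S) and contains the diagonal {(μ,μ) : μ ∈ P(X)}. Define Tg(x) := sup{ ∫_X g dσ : (δ_x,σ) ∈ S } for g ∈ C(X), and extend T to upper semicontinuous bounded-above functions h by the same formula (the integral taking values in [−∞,∞)). Then for every g ∈ C(X): Tg ≥ g pointwise on X, and T(Tg) = Tg (idempotence). -/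
open MeasureTheory Topology Filter Set BoundedContinuousFunction
open scoped ENNReal NNReal

noncomputable section

/-- The positive part of an extended real number, as an element of `ℝ≥0∞`. -/
def epos (a : EReal) : ℝ≥0∞ := if a = ⊤ then ⊤ else ENNReal.ofReal a.toReal

/-- Signed integral of an `EReal`-valued function (the natural value when `f` is
bounded above or bounded below). -/
def eint {α : Type*} [MeasurableSpace α] (μ : Measure α) (f : α → EReal) : EReal :=
  ((∫⁻ x, epos (f x) ∂μ : ℝ≥0∞) : EReal) - ((∫⁻ x, epos (-(f x)) ∂μ : ℝ≥0∞) : EReal)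

/-- The Dirac measure at a point, as a probability measure. -/
def diracP {α : Type*} [MeasurableSpace α] (x : α) : ProbabilityMeasure α :=
  ⟨Measure.dirac x, inferInstance⟩

/-- Convexity of a set of pairs of probability measures, via convex combinations
of the underlying measures. -/
def PConvex {X Y : Type*} [MeasurableSpace X] [MeasurableSpace Y]
    (C : Set (ProbabilityMeasure X × ProbabilityMeasure Y)) : Prop :=
  ∀ p ∈ C, ∀ q ∈ C, ∀ a b : ℝ≥0, a + b = 1 →
    ∀ (μ : ProbabilityMeasure X) (ν : ProbabilityMeasure Y),
      (μ : Measure X) = a • (p.1 : Measure X) + b • (q.1 : Measure X) →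
      (ν : Measure Y) = a • (p.2 : Measure Y) + b • (q.2 : Measure Y) →
      (μ, ν) ∈ C

/-- A gambling house: every Dirac measure has at least one target in `S`. -/
def IsGamblingHouse {X Y : Type*} [MeasurableSpace X] [MeasurableSpace Y]
    (S : Set (ProbabilityMeasure X × ProbabilityMeasure Y)) : Prop :=
  ∀ x : X, ∃ σ : ProbabilityMeasure Y, (diracP x, σ) ∈ S

/-- The (positively 1-homogeneous) Kantorovich operator of a gambling house:
`Tg(x) = sup { ∫ g dσ : (δ_x, σ) ∈ S }`. -/
def houseOp {X Y : Type*} [MeasurableSpace X] [TopologicalSpace Y] [MeasurableSpace Y]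
    (S : Set (ProbabilityMeasure X × ProbabilityMeasure Y)) (g : C(Y, ℝ)) (x : X) : EReal :=
  ⨆ σ ∈ {σ : ProbabilityMeasure Y | (diracP x, σ) ∈ S},
    (((∫ y, g y ∂(σ : Measure Y)) : ℝ) : EReal)

/-- The Kantorovich operator of a gambling house, extended to
extended-real-valued functions: `Tg(x) = sup { ∫ g dσ : (δ_x, σ) ∈ S }`. -/
def houseOpU {X Y : Type*} [MeasurableSpace X] [MeasurableSpace Y]
    (S : Set (ProbabilityMeasure X × ProbabilityMeasure Y)) (g : Y → EReal) (x : X) : EReal :=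
  ⨆ σ ∈ {σ : ProbabilityMeasure Y | (diracP x, σ) ∈ S}, eint (σ : Measure Y) g

set_option linter.unusedSectionVars false

section Aux

variable {X : Type*} [MetricSpace X] [CompactSpace X] [MeasurableSpace X] [BorelSpace X]

lemma epos_coe (r : ℝ) : epos (r : EReal) = ENNReal.ofReal r := by
  simp [epos]

lemma coe_toReal_ennreal {x : ℝ≥0∞} (hx : x ≠ ⊤) : ((x.toReal : ℝ) : EReal) = (x : EReal) := by
  rw [← EReal.toReal_coe_ennreal (x := x)]
  refine EReal.coe_toReal ?_ ?_
  · simpa [EReal.coe_ennreal_eq_top_iff] using hx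
  · exact EReal.coe_ennreal_ne_bot x

lemma eint_coe_eq {α : Type*} [MeasurableSpace α] (μ : Measure α) [IsProbabilityMeasure μ]
    (f : α → ℝ) (hf : Measurable f) (C : ℝ) (hb : ∀ x, |f x| ≤ C) :
    eint μ (fun x => (f x : EReal)) = ((∫ x, f x ∂μ : ℝ) : EReal) := by
  have hint : Integrable f μ := by
    refine (integrable_const C).mono' hf.aestronglyMeasurable (ae_of_all _ ?_)
    intro x; simpa [Real.norm_eq_abs] using hb x
  have h1 : ∫ x, f x ∂μ
      = (∫⁻ x, ENNReal.ofReal (f x) ∂μ).toReal - (∫⁻ x, ENNReal.ofReal (-(f x)) ∂μ).toReal :=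
    integral_eq_lintegral_pos_part_sub_lintegral_neg_part hint
  have hle : ∀ h : α → ℝ, (∀ x, |h x| ≤ C) → (∫⁻ x, ENNReal.ofReal (h x) ∂μ) ≠ ⊤ := by
    intro h hh
    have : (∫⁻ x, ENNReal.ofReal (h x) ∂μ) ≤ ∫⁻ _, ENNReal.ofReal C ∂μ := by
      refine lintegral_mono fun x => ENNReal.ofReal_le_ofReal ?_
      exact (le_abs_self _).trans (hh x)
    refine ne_top_of_le_ne_top ?_ this
    simp
  have h2 : (∫⁻ x, ENNReal.ofReal (f x) ∂μ) ≠ ⊤ := hle f hb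
  have h3 : (∫⁻ x, ENNReal.ofReal (-(f x)) ∂μ) ≠ ⊤ := by
    refine hle (fun x => -(f x)) fun x => ?_
    simpa [abs_neg] using hb x
  have e1 : eint μ (fun x => (f x : EReal))
      = ((∫⁻ x, ENNReal.ofReal (f x) ∂μ : ℝ≥0∞) : EReal)
        - ((∫⁻ x, ENNReal.ofReal (-(f x)) ∂μ : ℝ≥0∞) : EReal) := by
    have p1 : ∫⁻ x, epos ((f x : ℝ) : EReal) ∂μ = ∫⁻ x, ENNReal.ofReal (f x) ∂μ :=
      lintegral_congr fun x => epos_coe _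
    have p2 : ∫⁻ x, epos (-((f x : ℝ) : EReal)) ∂μ = ∫⁻ x, ENNReal.ofReal (-(f x)) ∂μ :=
      lintegral_congr fun x => by rw [← EReal.coe_neg, epos_coe]
    simp only [eint, p1, p2]
  rw [e1, h1]
  rw [EReal.coe_sub]
  congr 1
  · exact (coe_toReal_ennreal h2).symm
  · exact (coe_toReal_ennreal h3).symm

variable {X : Type*} [MetricSpace X] [CompactSpace X] [MeasurableSpace X] [BorelSpace X]

def Jfun (g : C(X, ℝ)) (ν : ProbabilityMeasure X) : ℝ := ∫ y, g y ∂(ν : Measure X)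

def Fre (S : Set (ProbabilityMeasure X × ProbabilityMeasure X)) (g : C(X, ℝ))
    (μ : ProbabilityMeasure X) : ℝ := sSup (Jfun g '' {ν | (μ, ν) ∈ S})

lemma Jfun_cont (g : C(X, ℝ)) : Continuous (Jfun g) := by
  have h := ProbabilityMeasure.continuous_integral_boundedContinuousFunction
    (X := X) (BoundedContinuousFunction.mkOfCompact g)
  exact h

lemma Jfun_abs_le (g : C(X, ℝ)) (ν : ProbabilityMeasure X) : |Jfun g ν| ≤ ‖g‖ := by
  have : ‖∫ y, g y ∂(ν : Measure X)‖ ≤ ‖g‖ * ((ν : Measure X) univ).toReal := by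
    refine norm_integral_le_of_norm_le_const (ae_of_all _ fun y => ?_)
    exact g.norm_coe_le_norm y
  simpa [Jfun, Real.norm_eq_abs] using this

lemma continuous_diracP : Continuous (fun x : X => diracP x) := by
  rw [continuous_iff_continuousAt]
  intro x
  unfold ContinuousAt
  rw [ProbabilityMeasure.tendsto_iff_forall_integral_tendsto]
  intro f
  have hrw : ∀ z : X, ∫ ω, f ω ∂((diracP z : ProbabilityMeasure X) : Measure X) = f z := by
    intro z
    simp [diracP, integral_dirac]
  simp only [hrw]
  exact f.continuous.tendsto x

lemma coe_biSup_eq (A : Set ℝ) (hne : A.Nonempty) (hbdd : BddAbove A) :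
    (⨆ a ∈ A, (a : EReal)) = ((sSup A : ℝ) : EReal) := by
  apply le_antisymm
  · exact iSup₂_le fun a ha => EReal.coe_le_coe_iff.mpr (le_csSup hbdd ha)
  · obtain ⟨a₀, ha₀⟩ := hne
    set b := ⨆ a ∈ A, (a : EReal) with hb
    have hle : ∀ a ∈ A, (a : EReal) ≤ b := fun a ha => le_iSup₂ (f := fun (a : ℝ) (_ : a ∈ A) => (a : EReal)) a ha
    by_cases htop : b = ⊤
    · simp [htop]
    · have hbot : b ≠ ⊥ := fun h => by simpa [h] using (hle a₀ ha₀)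
      rw [← EReal.coe_toReal htop hbot]
      refine EReal.coe_le_coe_iff.mpr (csSup_le ⟨a₀, ha₀⟩ fun a ha => ?_)
      have h2 := hle a ha
      rw [← EReal.coe_toReal htop hbot] at h2
      exact_mod_cast h2

lemma Jfun_image_nonempty (S : Set (ProbabilityMeasure X × ProbabilityMeasure X)) (g : C(X, ℝ))
    (hdiag : ∀ μ : ProbabilityMeasure X, (μ, μ) ∈ S) (μ : ProbabilityMeasure X) :
    (Jfun g '' {ν | (μ, ν) ∈ S}).Nonempty := ⟨Jfun g μ, μ, hdiag μ, rfl⟩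

lemma Jfun_image_bdd (g : C(X, ℝ)) (A : Set (ProbabilityMeasure X)) :
    BddAbove (Jfun g '' A) := by
  refine ⟨‖g‖, ?_⟩
  rintro r ⟨ν, -, rfl⟩
  exact (abs_le.mp (Jfun_abs_le g ν)).2

lemma Fre_le (S : Set (ProbabilityMeasure X × ProbabilityMeasure X)) (g : C(X, ℝ))
    (hdiag : ∀ μ : ProbabilityMeasure X, (μ, μ) ∈ S) (μ : ProbabilityMeasure X) :
    |Fre S g μ| ≤ ‖g‖ := by
  rw [abs_le]
  constructor
  · refine le_trans ?_ (le_csSup (Jfun_image_bdd g _) ⟨μ, hdiag μ, rfl⟩)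
    exact (abs_le.mp (Jfun_abs_le g μ)).1
  · refine csSup_le (Jfun_image_nonempty S g hdiag μ) ?_
    rintro r ⟨ν, -, rfl⟩
    exact (abs_le.mp (Jfun_abs_le g ν)).2

lemma Fre_usc (S : Set (ProbabilityMeasure X × ProbabilityMeasure X)) (g : C(X, ℝ))
    (hcomp : IsCompact S) (hdiag : ∀ μ : ProbabilityMeasure X, (μ, μ) ∈ S) :
    UpperSemicontinuous (Fre S g) := by
  intro μ y hy
  obtain ⟨r, hr1, hr2⟩ := exists_between hy
  set K := S ∩ (fun p : ProbabilityMeasure X × ProbabilityMeasure X => Jfun g p.2) ⁻¹' (Ici r)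
    with hKdef
  have hKcl : IsClosed ((fun p : ProbabilityMeasure X × ProbabilityMeasure X => Jfun g p.2)
      ⁻¹' (Ici r)) := isClosed_Ici.preimage ((Jfun_cont g).comp continuous_snd)
  have hK : IsCompact K := hcomp.inter_right hKcl
  have hDcl : IsClosed (Prod.fst '' K) := (hK.image continuous_fst).isClosed
  have hμ : μ ∉ Prod.fst '' K := by
    rintro ⟨⟨μ', ν⟩, ⟨hS, hr'⟩, h1⟩
    simp only at h1
    subst h1
    have hle : Jfun g ν ≤ Fre S g μ' := le_csSup (Jfun_image_bdd g _) ⟨ν, hS, rfl⟩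
    have : r ≤ Jfun g ν := hr'
    linarith
  have hmem : (Prod.fst '' K)ᶜ ∈ 𝓝 μ := hDcl.isOpen_compl.mem_nhds hμ
  refine Filter.eventually_of_mem hmem fun μ' hμ' => ?_
  have hsup : Fre S g μ' ≤ r := by
    refine csSup_le (Jfun_image_nonempty S g hdiag μ') ?_
    rintro a ⟨ν, hν, rfl⟩
    by_contra hc
    push_neg at hc
    exact hμ' ⟨(μ', ν), ⟨hν, le_of_lt hc⟩, rfl⟩
  exact lt_of_le_of_lt hsup hr2

lemma Tre_usc (S : Set (ProbabilityMeasure X × ProbabilityMeasure X)) (g : C(X, ℝ))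
    (hcomp : IsCompact S) (hdiag : ∀ μ : ProbabilityMeasure X, (μ, μ) ∈ S) :
    UpperSemicontinuous (fun x : X => Fre S g (diracP x)) := fun x y hy =>
  (continuous_diracP.tendsto x).eventually (Fre_usc S g hcomp hdiag (diracP x) y hy)

lemma Tre_measurable (S : Set (ProbabilityMeasure X × ProbabilityMeasure X)) (g : C(X, ℝ))
    (hcomp : IsCompact S) (hdiag : ∀ μ : ProbabilityMeasure X, (μ, μ) ∈ S) :
    Measurable (fun x : X => Fre S g (diracP x)) :=
  (Tre_usc S g hcomp hdiag).measurable

lemma eint_g (g : C(X, ℝ)) (σ : ProbabilityMeasure X) :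
    eint (σ : Measure X) (fun y => ((g y : ℝ) : EReal)) = ((Jfun g σ : ℝ) : EReal) :=
  eint_coe_eq _ g g.continuous.measurable ‖g‖ fun y => by
    simpa [Real.norm_eq_abs] using g.norm_coe_le_norm y

lemma eint_f_eq (f : X → ℝ) (hf : Measurable f) (C : ℝ) (hb : ∀ x, |f x| ≤ C)
    (σ : ProbabilityMeasure X) :
    eint (σ : Measure X) (fun y => ((f y : ℝ) : EReal)) = ((∫ y, f y ∂(σ : Measure X) : ℝ) : EReal) :=
  eint_coe_eq _ f hf C hb

lemma houseOpU_coe (S : Set (ProbabilityMeasure X × ProbabilityMeasure X)) (g : C(X, ℝ))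
    (hdiag : ∀ μ : ProbabilityMeasure X, (μ, μ) ∈ S) (x : X) :
    houseOpU S (fun y => ((g y : ℝ) : EReal)) x = ((Fre S g (diracP x) : ℝ) : EReal) := by
  unfold houseOpU
  have h1 : (⨆ σ ∈ {σ : ProbabilityMeasure X | (diracP x, σ) ∈ S},
      eint (σ : Measure X) (fun y => ((g y : ℝ) : EReal)))
      = ⨆ a ∈ Jfun g '' {σ : ProbabilityMeasure X | (diracP x, σ) ∈ S}, ((a : ℝ) : EReal) := by
    rw [iSup_image]
    exact iSup_congr fun σ => iSup_congr fun _ => eint_g g σ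
  rw [h1, coe_biSup_eq _ (Jfun_image_nonempty S g hdiag (diracP x)) (Jfun_image_bdd g _)]
  rfl

lemma isProb_sum {ι : Type*} (s : Finset ι) (w : ι → ℝ≥0) (hw : ∑ i ∈ s, w i = 1)
    (μs : ι → ProbabilityMeasure X) :
    IsProbabilityMeasure (∑ i ∈ s, w i • (μs i : Measure X)) := by
  constructor
  rw [Measure.finset_sum_apply]
  have : ∀ i ∈ s, (w i • (μs i : Measure X)) univ = (w i : ℝ≥0∞) := by
    intro i _
    rw [Measure.smul_apply, measure_univ, ENNReal.smul_def, smul_eq_mul, mul_one]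
  rw [Finset.sum_congr rfl this]
  rw [← ENNReal.coe_finset_sum, hw, ENNReal.coe_one]

lemma PConvex_sum (S : Set (ProbabilityMeasure X × ProbabilityMeasure X)) (hconv : PConvex S)
    {ι : Type*} [DecidableEq ι] (s : Finset ι)
    (P : ι → ProbabilityMeasure X × ProbabilityMeasure X) :
    ∀ (w : ι → ℝ≥0) (_ : ∀ i ∈ s, P i ∈ S) (_ : ∑ i ∈ s, w i = 1)
      (μ ν : ProbabilityMeasure X)
      (_ : (μ : Measure X) = ∑ i ∈ s, w i • ((P i).1 : Measure X))
      (_ : (ν : Measure X) = ∑ i ∈ s, w i • ((P i).2 : Measure X)),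
      (μ, ν) ∈ S := by
  induction s using Finset.induction_on with
  | empty => intro _ _ hw; simp at hw
  | insert _ _ ha ih =>
    rename_i a s'
    intro w hP hw μ ν hμ hν
    rw [Finset.sum_insert ha] at hw hμ hν
    set t : ℝ≥0 := ∑ i ∈ s', w i with htdef
    by_cases ht : t = 0
    · have hz : ∀ i ∈ s', w i = 0 := by
        intro i hi
        exact (Finset.sum_eq_zero_iff.mp ht) i hi
      have hwa : w a = 1 := by
        rw [ht, add_zero] at hw; exact hw
      have hzsum : ∀ (m : ι → Measure X), ∑ i ∈ s', w i • m i = 0 := by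
        intro m
        refine Finset.sum_eq_zero fun i hi => ?_
        rw [hz i hi, zero_smul]
      refine hconv (P a) (hP a (Finset.mem_insert_self a s')) (P a)
        (hP a (Finset.mem_insert_self a s')) 1 0 (by simp) μ ν ?_ ?_
      · rw [hμ, hzsum, hwa]; simp
      · rw [hν, hzsum, hwa]; simp
    · have hw' : ∑ i ∈ s', (w i * t⁻¹) = 1 := by
        rw [← Finset.sum_mul, ← htdef, mul_inv_cancel₀ ht]
      set μ' : ProbabilityMeasure X :=
        ⟨∑ i ∈ s', (w i * t⁻¹) • ((P i).1 : Measure X),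
          isProb_sum s' _ hw' (fun i => (P i).1)⟩ with hμ'def
      set ν' : ProbabilityMeasure X :=
        ⟨∑ i ∈ s', (w i * t⁻¹) • ((P i).2 : Measure X),
          isProb_sum s' _ hw' (fun i => (P i).2)⟩ with hν'def
      have hmem : (μ', ν') ∈ S :=
        ih (fun i => w i * t⁻¹) (fun i hi => hP i (Finset.mem_insert_of_mem hi)) hw' μ' ν' rfl rfl
      have hcomb : ∀ (m : ι → Measure X),
          t • (∑ i ∈ s', (w i * t⁻¹) • m i) = ∑ i ∈ s', w i • m i := by
        intro m
        rw [Finset.smul_sum]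
        refine Finset.sum_congr rfl fun i hi => ?_
        rw [smul_smul, mul_comm (w i), ← mul_assoc, mul_inv_cancel₀ ht, one_mul]
      refine hconv (P a) (hP a (Finset.mem_insert_self a s')) (μ', ν') hmem (w a) t hw μ ν ?_ ?_
      · rw [hμ]
        congr 1
        exact (hcomb fun i => ((P i).1 : Measure X)).symm
      · rw [hν]
        congr 1
        exact (hcomb fun i => ((P i).2 : Measure X)).symm

lemma exists_partition [Nonempty X] (δ : ℝ) (hδ : 0 < δ) :
    ∃ (n : ℕ) (A : ℕ → Set X),
      (∀ k, MeasurableSet (A k)) ∧ Pairwise (Function.onFun Disjoint A) ∧ (⋃ k, A k = univ) ∧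
      (∀ k, ∀ x ∈ A k, ∀ y ∈ A k, dist x y ≤ δ) ∧ (∀ k, n ≤ k → A k = ∅) := by
  obtain ⟨t, ht⟩ := isCompact_univ.elim_finite_subcover
    (fun c : X => Metric.ball c (δ / 2)) (fun c => Metric.isOpen_ball)
    (fun x _ => mem_iUnion.mpr ⟨x, Metric.mem_ball_self (by linarith)⟩)
  set L := t.toList with hL
  set n := L.length with hn
  set B : ℕ → Set X := fun k => if h : k < n then Metric.ball (L.get ⟨k, h⟩) (δ / 2) else ∅
    with hB
  refine ⟨n, disjointed B, fun k => MeasurableSet.disjointed (fun m => ?_) k,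
    disjoint_disjointed B, ?_, ?_, ?_⟩
  · by_cases h : m < n <;> simp [hB, h, Metric.isOpen_ball.measurableSet]
  · rw [iUnion_disjointed]
    refine eq_univ_of_forall fun x => ?_
    have hx := ht (mem_univ x)
    rw [mem_iUnion₂] at hx
    obtain ⟨c, hct, hxc⟩ := hx
    have hcL : c ∈ L := Finset.mem_toList.mpr hct
    obtain ⟨⟨k, hkn⟩, hk⟩ := List.mem_iff_get.mp hcL
    refine mem_iUnion.mpr ⟨k, ?_⟩
    have hBk : B k = Metric.ball (L.get ⟨k, hkn⟩) (δ / 2) := by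
      simp only [hB]
      rw [dif_pos hkn]
    rw [hBk, hk]
    exact hxc
  · intro k x hx y hy
    have hxB : x ∈ B k := disjointed_subset B k hx
    have hyB : y ∈ B k := disjointed_subset B k hy
    by_cases h : k < n
    · simp only [hB, dif_pos h] at hxB hyB
      have h1 := Metric.mem_ball.mp hxB
      have h2 := Metric.mem_ball.mp hyB
      have h3 : dist x y ≤ dist x (L.get ⟨k, h⟩) + dist (L.get ⟨k, h⟩) y := dist_triangle _ _ _
      rw [dist_comm (L.get ⟨k, h⟩) y] at h3
      linarith
    · simp only [hB, dif_neg h] at hxB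
      exact absurd hxB (notMem_empty x)
  · intro k hk
    refine eq_empty_of_subset_empty ?_
    refine (disjointed_subset B k).trans ?_
    simp [hB, not_lt.mpr hk]

lemma build (S : Set (ProbabilityMeasure X × ProbabilityMeasure X)) (g : C(X, ℝ))
    (hconv : PConvex S) (hcomp : IsCompact S)
    (hdiag : ∀ μ : ProbabilityMeasure X, (μ, μ) ∈ S) (σ : ProbabilityMeasure X)
    (ε : ℝ) (hε : 0 < ε) (δ : ℝ) (hδ : 0 < δ) :
    ∃ μP : ProbabilityMeasure X,
      (∫ x, Fre S g (diracP x) ∂(σ : Measure X)) - 2 * ε ≤ Fre S g μP ∧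
      ∀ (f : X →ᵇ ℝ) (ε' : ℝ), 0 ≤ ε' → (∀ x y : X, dist x y ≤ δ → |f x - f y| ≤ ε') →
        |(∫ x, f x ∂(μP : Measure X)) - ∫ x, f x ∂(σ : Measure X)| ≤ ε' := by
  have hXne : Nonempty X := by
    by_contra h
    rw [not_nonempty_iff] at h
    have h1 := measure_univ (μ := (σ : Measure X))
    rw [Set.univ_eq_empty_iff.mpr h, measure_empty] at h1
    exact zero_ne_one h1
  obtain ⟨n, A, hAm, hAdisj, hAuniv, hAdiam, hAempty⟩ := exists_partition (X := X) δ hδ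
  set T := fun x : X => Fre S g (diracP x) with hT
  have hTm : Measurable T := Tre_measurable S g hcomp hdiag
  have hTb : ∀ x, |T x| ≤ ‖g‖ := fun x => Fre_le S g hdiag _
  have hTint : Integrable T (σ : Measure X) := by
    refine (integrable_const ‖g‖).mono' hTm.aestronglyMeasurable (ae_of_all _ fun x => ?_)
    simpa [Real.norm_eq_abs] using hTb x
  -- select points
  have hsel : ∀ k : ℕ, ∃ yk : X, (A k).Nonempty → yk ∈ A k ∧ ∀ z ∈ A k, T z ≤ T yk + ε := by
    intro k
    by_cases h : (A k).Nonempty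
    · have hbdd : BddAbove (T '' A k) := ⟨‖g‖, by rintro r ⟨z, -, rfl⟩; exact (abs_le.mp (hTb z)).2⟩
      have hlt : sSup (T '' A k) - ε < sSup (T '' A k) := by linarith
      obtain ⟨b, ⟨yk, hyA, rfl⟩, hby⟩ := exists_lt_of_lt_csSup (h.image T) hlt
      refine ⟨yk, fun _ => ⟨hyA, fun z hz => ?_⟩⟩
      have : T z ≤ sSup (T '' A k) := le_csSup hbdd ⟨z, hz, rfl⟩
      linarith
    · exact ⟨Classical.arbitrary X, fun hc => absurd hc h⟩
  choose y hy using hsel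
  -- select measures
  have hsel2 : ∀ k : ℕ, ∃ νk : ProbabilityMeasure X,
      (diracP (y k), νk) ∈ S ∧ T (y k) - ε ≤ Jfun g νk := by
    intro k
    have hne' := Jfun_image_nonempty S g hdiag (diracP (y k))
    have hlt : T (y k) - ε < sSup (Jfun g '' {ν | (diracP (y k), ν) ∈ S}) := by
      have heq : T (y k) = sSup (Jfun g '' {ν | (diracP (y k), ν) ∈ S}) := rfl
      linarith
    obtain ⟨b, ⟨νk, hνk, rfl⟩, hb⟩ := exists_lt_of_lt_csSup hne' hlt
    exact ⟨νk, hνk, le_of_lt hb⟩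
  choose ν hν1 hν2 using hsel2
  -- weights
  set w : ℕ → ℝ≥0 := fun k => ((σ : Measure X) (A k)).toNNReal with hwdef
  have hwe : ∀ k, ((w k : ℝ≥0∞)) = (σ : Measure X) (A k) :=
    fun k => ENNReal.coe_toNNReal (measure_ne_top _ _)
  have hUnionEq : ⋃ k ∈ Finset.range n, A k = univ := by
    refine Subset.antisymm (subset_univ _) ?_
    rw [← hAuniv]
    refine iUnion_subset fun k => ?_
    by_cases h : k < n
    · exact subset_biUnion_of_mem (Finset.mem_range.mpr h)
    · rw [hAempty k (not_lt.mp h)]; exact empty_subset _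
  have hdisj' : (↑(Finset.range n) : Set ℕ).PairwiseDisjoint A :=
    fun i _ j _ hij => hAdisj hij
  have hwsum : ∑ k ∈ Finset.range n, w k = 1 := by
    have h1 : ∑ k ∈ Finset.range n, ((w k : ℝ≥0∞)) = 1 := by
      rw [Finset.sum_congr rfl fun k _ => hwe k,
        ← measure_biUnion_finset hdisj' fun k _ => hAm k, hUnionEq, measure_univ]
    rw [← ENNReal.coe_finset_sum] at h1
    exact_mod_cast h1
  have hwsumR : ∑ k ∈ Finset.range n, ((w k : ℝ)) = 1 := by exact_mod_cast hwsum
  have hwReal : ∀ k, ((w k : ℝ)) = ((σ : Measure X) (A k)).toReal := fun k => rfl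
  -- the two composite probability measures
  set μP : ProbabilityMeasure X :=
    ⟨∑ k ∈ Finset.range n, w k • (diracP (y k) : Measure X),
      isProb_sum _ _ hwsum fun k => diracP (y k)⟩ with hμP
  set νP : ProbabilityMeasure X :=
    ⟨∑ k ∈ Finset.range n, w k • ((ν k : ProbabilityMeasure X) : Measure X),
      isProb_sum _ _ hwsum ν⟩ with hνP
  have hmem : (μP, νP) ∈ S :=
    PConvex_sum S hconv (Finset.range n) (fun k => (diracP (y k), ν k)) w
      (fun k _ => hν1 k) hwsum μP νP rfl rfl
  -- integral against a sum of scaled measures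
  have hsumint : ∀ (h : X → ℝ), Continuous h → ∀ (ms : ℕ → ProbabilityMeasure X),
      ∫ x, h x ∂((∑ k ∈ Finset.range n, w k • ((ms k : ProbabilityMeasure X) : Measure X)))
        = ∑ k ∈ Finset.range n, ((w k : ℝ)) * ∫ x, h x ∂((ms k : ProbabilityMeasure X) : Measure X) := by
    intro h hc ms
    rw [integral_finset_sum_measure ?_]
    · refine Finset.sum_congr rfl fun k _ => ?_
      rw [integral_smul_nnreal_measure]
      simp [NNReal.smul_def]
    · intro k _
      have hi := (BoundedContinuousFunction.mkOfCompact (⟨h, hc⟩ : C(X, ℝ))).integrable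
        (μ := w k • ((ms k : ProbabilityMeasure X) : Measure X))
      exact hi
  -- first component pieces
  have hJsum : Jfun g νP = ∑ k ∈ Finset.range n, ((w k : ℝ)) * Jfun g (ν k) := by
    have h0 := hsumint g g.continuous ν
    simpa [Jfun, hνP] using h0
  have hkey : ∀ k ∈ Finset.range n,
      (∫ x in A k, T x ∂(σ : Measure X)) ≤ ((w k : ℝ)) * (Jfun g (ν k) + 2 * ε) := by
    intro k _
    by_cases h : (A k).Nonempty
    · obtain ⟨hyA, hbound⟩ := hy k h
      have hc : IntegrableOn (fun _ : X => T (y k) + ε) (A k) (σ : Measure X) :=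
        integrableOn_const (measure_ne_top _ _)
      have h1 : ∫ x in A k, T x ∂(σ : Measure X)
          ≤ ∫ _x in A k, (T (y k) + ε) ∂(σ : Measure X) :=
        setIntegral_mono_on hTint.integrableOn hc (hAm k) fun z hz => hbound z hz
      rw [setIntegral_const] at h1
      have h3 : ((σ : Measure X).real (A k)) = ((w k : ℝ)) := rfl
      rw [h3, smul_eq_mul] at h1
      have h2 : T (y k) + ε ≤ Jfun g (ν k) + 2 * ε := by
        have := hν2 k; linarith
      exact h1.trans (mul_le_mul_of_nonneg_left h2 (w k).coe_nonneg)
    · rw [not_nonempty_iff_eq_empty] at h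
      have hw0 : ((w k : ℝ)) = 0 := by
        simp [hwdef, h]
      rw [h, hw0]
      simp
  have hTotal : ∫ x, T x ∂(σ : Measure X)
      = ∑ k ∈ Finset.range n, ∫ x in A k, T x ∂(σ : Measure X) := by
    have h0 := integral_biUnion_finset (f := T) (μ := (σ : Measure X)) (Finset.range n)
      (fun k _ => hAm k) hdisj' (fun k _ => hTint.integrableOn)
    rw [hUnionEq, setIntegral_univ] at h0
    exact h0
  refine ⟨μP, ?_, ?_⟩
  · have h2 : ∫ x, T x ∂(σ : Measure X)
        ≤ ∑ k ∈ Finset.range n, ((w k : ℝ)) * (Jfun g (ν k) + 2 * ε) := by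
      rw [hTotal]; exact Finset.sum_le_sum hkey
    have h3 : ∑ k ∈ Finset.range n, ((w k : ℝ)) * (Jfun g (ν k) + 2 * ε)
        = Jfun g νP + 2 * ε := by
      rw [hJsum]
      rw [show (∑ k ∈ Finset.range n, ((w k : ℝ)) * (Jfun g (ν k) + 2 * ε))
          = (∑ k ∈ Finset.range n, ((w k : ℝ)) * Jfun g (ν k))
            + (∑ k ∈ Finset.range n, ((w k : ℝ))) * (2 * ε) by
        rw [Finset.sum_mul, ← Finset.sum_add_distrib]
        exact Finset.sum_congr rfl fun k _ => by ring]
      rw [hwsumR, one_mul]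
    have h4 : Jfun g νP ≤ Fre S g μP := le_csSup (Jfun_image_bdd g _) ⟨νP, hmem, rfl⟩
    have : ∫ x, T x ∂(σ : Measure X) ≤ Fre S g μP + 2 * ε := by
      rw [hTotal] at *
      linarith [h2, h3.symm ▸ h2]
    linarith [this, hTotal]
  · intro f ε' hε' hf
    have hμPint : ∫ x, f x ∂(μP : Measure X)
        = ∑ k ∈ Finset.range n, ((w k : ℝ)) * f (y k) := by
      have h0 := hsumint f f.continuous (fun k => diracP (y k))
      have h1 : ∀ k : ℕ, ∫ x, f x ∂((diracP (y k) : ProbabilityMeasure X) : Measure X)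
          = f (y k) := by
        intro k
        show ∫ x, f x ∂(Measure.dirac (y k)) = f (y k)
        exact integral_dirac _ _
      simp only [h1] at h0
      exact h0
    have hfT : ∫ x, f x ∂(σ : Measure X)
        = ∑ k ∈ Finset.range n, ∫ x in A k, f x ∂(σ : Measure X) := by
      have h0 := integral_biUnion_finset (f := fun x => f x) (μ := (σ : Measure X))
        (Finset.range n) (fun k _ => hAm k) hdisj'
        (fun k _ => (f.integrable _).integrableOn)
      rw [hUnionEq, setIntegral_univ] at h0
      exact h0
    rw [hμPint, hfT, ← Finset.sum_sub_distrib]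
    refine (Finset.abs_sum_le_sum_abs _ _).trans ?_
    have hterm : ∀ k ∈ Finset.range n,
        |((w k : ℝ)) * f (y k) - ∫ x in A k, f x ∂(σ : Measure X)| ≤ ε' * ((w k : ℝ)) := by
      intro k _
      by_cases h : (A k).Nonempty
      · obtain ⟨hyA, -⟩ := hy k h
        have hcint : IntegrableOn (fun _ : X => f (y k)) (A k) (σ : Measure X) :=
          integrableOn_const (measure_ne_top _ _)
        have hrw : ((w k : ℝ)) * f (y k) - ∫ x in A k, f x ∂(σ : Measure X)
            = ∫ x in A k, (f (y k) - f x) ∂(σ : Measure X) := by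
          rw [integral_sub hcint (f.integrable _).integrableOn, setIntegral_const,
            smul_eq_mul]
          rfl
        rw [hrw]
        have hb := norm_setIntegral_le_of_norm_le_const (μ := (σ : Measure X))
          (f := fun z => f (y k) - f z) (C := ε') (measure_lt_top _ _)
          (fun z hz => by
            rw [Real.norm_eq_abs]
            exact hf (y k) z (hAdiam k (y k) hyA z hz))
        rw [Real.norm_eq_abs] at hb
        exact hb
      · rw [not_nonempty_iff_eq_empty] at h
        have hw0 : ((w k : ℝ)) = 0 := by simp [hwdef, h]
        rw [h, hw0]
        simp
    refine (Finset.sum_le_sum hterm).trans ?_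
    rw [← Finset.mul_sum, hwsumR, mul_one]

lemma core (S : Set (ProbabilityMeasure X × ProbabilityMeasure X)) (g : C(X, ℝ))
    (hconv : PConvex S) (hcomp : IsCompact S)
    (hdiag : ∀ μ : ProbabilityMeasure X, (μ, μ) ∈ S) (σ : ProbabilityMeasure X) :
    ∫ x, Fre S g (diracP x) ∂(σ : Measure X) ≤ Fre S g σ := by
  refine le_of_forall_sub_le fun ε hε => ?_
  have hbuild : ∀ m : ℕ, ∃ μP : ProbabilityMeasure X,
      (∫ x, Fre S g (diracP x) ∂(σ : Measure X)) - 2 * (ε / 4) ≤ Fre S g μP ∧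
      ∀ (f : X →ᵇ ℝ) (ε' : ℝ), 0 ≤ ε' →
        (∀ x y : X, dist x y ≤ 1 / (m + 1) → |f x - f y| ≤ ε') →
        |(∫ x, f x ∂(μP : Measure X)) - ∫ x, f x ∂(σ : Measure X)| ≤ ε' :=
    fun m => build S g hconv hcomp hdiag σ (ε / 4) (by linarith) (1 / (m + 1)) (by positivity)
  choose μs h1 h2 using hbuild
  have htend : Tendsto μs atTop (𝓝 σ) := by
    rw [ProbabilityMeasure.tendsto_iff_forall_integral_tendsto]
    intro f
    rw [Metric.tendsto_atTop]
    intro e he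
    have huc : UniformContinuous (fun x => f x) :=
      CompactSpace.uniformContinuous_of_continuous f.continuous
    obtain ⟨d, hd, hdp⟩ := Metric.uniformContinuous_iff.mp huc (e / 2) (by linarith)
    obtain ⟨N, hN⟩ := exists_nat_gt (1 / d)
    refine ⟨N, fun m hm => ?_⟩
    have hNd : (1 : ℝ) / (N + 1) < d := by
      rw [div_lt_iff₀ (by positivity)]
      rw [div_lt_iff₀ hd] at hN
      nlinarith [hd.le]
    have hδm : (1 : ℝ) / (m + 1) ≤ 1 / (N + 1) := by
      apply one_div_le_one_div_of_le (by positivity)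
      have : (N : ℝ) ≤ (m : ℝ) := by exact_mod_cast hm
      linarith
    have key := h2 m f (e / 2) (by linarith) (fun x y' hxy => by
      have hlt : dist x y' < d := lt_of_le_of_lt (hxy.trans hδm) hNd
      have := hdp hlt
      rw [Real.dist_eq] at this
      exact this.le)
    rw [Real.dist_eq]
    exact lt_of_le_of_lt key (by linarith)
  by_contra hcon
  push_neg at hcon
  have husc := Fre_usc S g hcomp hdiag σ
    ((∫ x, Fre S g (diracP x) ∂(σ : Measure X)) - ε / 2) (by linarith)
  obtain ⟨m, hm⟩ := (htend.eventually husc).exists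
  have hge := h1 m
  linarith

end Aux

/-- The Kantorovich operator of a transitive gambling house containing the
diagonal satisfies `Tg ≥ g` and is idempotent. -/
theorem houseOp_idempotent
    {X : Type*} [MetricSpace X] [CompactSpace X] [MeasurableSpace X] [BorelSpace X]
    (S : Set (ProbabilityMeasure X × ProbabilityMeasure X))
    (hconv : PConvex S) (hcomp : IsCompact S) (hhouse : IsGamblingHouse S)
    (htrans : ∀ μ σ ν : ProbabilityMeasure X, (μ, σ) ∈ S → (σ, ν) ∈ S → (μ, ν) ∈ S)
    (hdiag : ∀ μ : ProbabilityMeasure X, (μ, μ) ∈ S) :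
    ∀ g : C(X, ℝ),
      (∀ x, ((g x : ℝ) : EReal) ≤ houseOpU S (fun y => ((g y : ℝ) : EReal)) x) ∧
      (∀ x, houseOpU S (houseOpU S (fun y => ((g y : ℝ) : EReal))) x
          = houseOpU S (fun y => ((g y : ℝ) : EReal)) x) := by
  intro g
  set T := fun x : X => Fre S g (diracP x) with hTdef
  have hHU : houseOpU S (fun y => ((g y : ℝ) : EReal)) = fun y => ((T y : ℝ) : EReal) :=
    funext fun y => houseOpU_coe S g hdiag y
  have hTm : Measurable T := Tre_measurable S g hcomp hdiag
  have hTb : ∀ x, |T x| ≤ ‖g‖ := fun x => Fre_le S g hdiag _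
  constructor
  · intro x
    rw [hHU]
    have hJ : Jfun g (diracP x) = g x := by
      show (∫ y, g y ∂(Measure.dirac x)) = g x
      exact integral_dirac _ _
    have : g x ≤ T x := by
      rw [← hJ]
      exact le_csSup (Jfun_image_bdd g _) ⟨diracP x, hdiag (diracP x), rfl⟩
    show ((g x : ℝ) : EReal) ≤ ((T x : ℝ) : EReal)
    exact_mod_cast this
  · intro x
    rw [hHU]
    have heint : ∀ σ : ProbabilityMeasure X,
        eint (σ : Measure X) (fun y => ((T y : ℝ) : EReal))
          = (((∫ y, T y ∂(σ : Measure X)) : ℝ) : EReal) :=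
      fun σ => eint_coe_eq _ T hTm ‖g‖ hTb
    show (⨆ σ ∈ {σ : ProbabilityMeasure X | (diracP x, σ) ∈ S},
        eint (σ : Measure X) (fun y => ((T y : ℝ) : EReal))) = ((T x : ℝ) : EReal)
    have hstep : (⨆ σ ∈ {σ : ProbabilityMeasure X | (diracP x, σ) ∈ S},
        eint (σ : Measure X) (fun y => ((T y : ℝ) : EReal)))
        = ⨆ σ ∈ {σ : ProbabilityMeasure X | (diracP x, σ) ∈ S},
          (((∫ y, T y ∂(σ : Measure X)) : ℝ) : EReal) :=
      iSup_congr fun σ => iSup_congr fun _ => heint σ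
    rw [hstep]
    apply le_antisymm
    · refine iSup₂_le fun σ hσ => ?_
      have hcore : ∫ y, T y ∂(σ : Measure X) ≤ Fre S g σ := core S g hconv hcomp hdiag σ
      have hmono : Fre S g σ ≤ T x := by
        refine csSup_le_csSup (Jfun_image_bdd g _) (Jfun_image_nonempty S g hdiag σ) ?_
        rintro r ⟨ν, hν, rfl⟩
        exact ⟨ν, htrans _ _ _ hσ hν, rfl⟩
      exact_mod_cast hcore.trans hmono
    · have hdx : diracP x ∈ {σ : ProbabilityMeasure X | (diracP x, σ) ∈ S} := hdiag (diracP x)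
      have hval : (∫ y, T y ∂((diracP x : ProbabilityMeasure X) : Measure X)) = T x := by
        show (∫ y, T y ∂(Measure.dirac x)) = T x
        exact integral_dirac _ _
      have := le_iSup₂ (f := fun (σ : ProbabilityMeasure X)
        (_ : σ ∈ {σ : ProbabilityMeasure X | (diracP x, σ) ∈ S}) =>
          (((∫ y, T y ∂(σ : Measure X)) : ℝ) : EReal)) (diracP x) hdx
      rw [hval] at this
      exact this
end
end
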